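/- The quotient of P(p,q) by the equivalence relation f ~ f + m(q+1) (for m ∈ ℤ) is a finite set of cardinality (p+1) · C(p+q+1, p+1), where C denotes the binomial coefficient. -/

import Mathlib

/-!
A class in `P(p,q)/ℤ` is determined by the residue of `f 0` modulo `q + 1` together with the
increments `f (j + 1) - f 0` for `0 ≤ j < p`, which form a monotone sequence in `[0, q + 1]`;
conversely every such pair arises, by extending `(f 0, …, f p)` periodically. Monotone sequences
of length `p` in a chain of `q + 2` elements are multisets of size `p`, of which there are
`C(p + q + 1, p)`, and `(q + 1) * C(p + q + 1, p) = (p + 1) * C(p + q + 1, p + 1)`.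
-/

/-- `ParacyclicHom p q f` says `f : ℤ → ℤ` is monotone and satisfies
`f (i + (p+1)) = f i + (q+1)` for all `i`, i.e. `f ∈ P(p,q)`. -/
def ParacyclicHom (p q : ℕ) (f : ℤ → ℤ) : Prop :=
  Monotone f ∧ ∀ i : ℤ, f (i + ((p : ℤ) + 1)) = f i + ((q : ℤ) + 1)

def monotoneEquivSym (α : Type*) [LinearOrder α] (n : ℕ) :
    {f : Fin n → α // Monotone f} ≃ Sym α n where
  toFun f := ⟨List.ofFn f.1, by simp⟩
  invFun s := ⟨fun i => (s.1.sort).get (i.cast (by simp)),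
    fun _ _ hij => List.sortedLE_iff_monotone_get.mp (Multiset.pairwise_sort _ _).sortedLE hij⟩
  left_inv f := by
    have : (List.ofFn f.1).mergeSort (fun a b => a ≤ b) = List.ofFn f.1 :=
      List.mergeSort_eq_self _ (List.sortedLE_ofFn_iff.mpr f.2).pairwise
    ext i
    simp [this, Fin.cast]
  right_inv s := by
    ext1
    change ↑(List.ofFn fun i => (s.1.sort).get (i.cast _)) = s.1
    rw [← List.ofFn_congr (by simp), List.ofFn_get, Multiset.sort_eq]

theorem card_monotone_fin (α : Type*) [LinearOrder α] [Fintype α] (n : ℕ) :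
    Nat.card {f : Fin n → α // Monotone f} = (Fintype.card α + n - 1).choose n := by
  rw [Nat.card_congr (monotoneEquivSym α n), Nat.card_eq_fintype_card, Sym.card_sym_eq_choose]

section ShiftEquivariant

variable {n N : ℤ} {f g : ℤ → ℤ}

theorem map_add_mul_of_forall_map_add (hf : ∀ i, f (i + n) = f i + N) (m i : ℤ) :
    f (i + m * n) = f i + m * N := by
  induction m using Int.induction_on generalizing i with
  | zero => simp
  | succ k ih => rw [add_one_mul, ← add_assoc, hf, ih]; ring
  | pred k ih =>
    have := hf (i + (-k - 1) * n)
    rw [show i + (-k - 1) * n + n = i + -k * n by ring, ih] at this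
    linarith

theorem map_eq_map_emod_add_of_forall_map_add (hf : ∀ i, f (i + n) = f i + N) (i : ℤ) :
    f i = f (i % n) + i / n * N := by
  rw [← map_add_mul_of_forall_map_add hf, mul_comm, Int.emod_add_mul_ediv]

theorem eq_add_of_forall_map_add_of_eqOn_Ico (hn : 0 < n) (hf : ∀ i, f (i + n) = f i + N)
    (hg : ∀ i, g (i + n) = g i + N) {c : ℤ} (h : ∀ t ∈ Set.Ico 0 n, g t = f t + c) (i : ℤ) :
    g i = f i + c := by
  rw [map_eq_map_emod_add_of_forall_map_add hf, map_eq_map_emod_add_of_forall_map_add hg,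
    h _ ⟨Int.emod_nonneg i hn.ne', Int.emod_lt_of_pos i hn⟩]
  ring

theorem monotone_of_forall_map_add (hn : 0 < n) (hf : ∀ i, f (i + n) = f i + N)
    (h : ∀ t ∈ Set.Ico 0 n, f t ≤ f (t + 1)) : Monotone f := by
  refine monotone_int_of_le_succ fun i => ?_
  have key := map_add_mul_of_forall_map_add hf (i / n) (i % n + 1)
  rw [add_right_comm, mul_comm, Int.emod_add_mul_ediv] at key
  rw [key, map_eq_map_emod_add_of_forall_map_add hf i, mul_comm]
  gcongr
  exact h _ ⟨Int.emod_nonneg i hn.ne', Int.emod_lt_of_pos i hn⟩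

end ShiftEquivariant

section PeriodicExtension

variable {n : ℕ} {N : ℤ} {a : Fin (n + 1) → ℤ}

def periodicExtension (n : ℕ) (N : ℤ) (a : Fin (n + 1) → ℤ) (i : ℤ) : ℤ :=
  a ⟨(i % (n + 1)).toNat, by have := Int.emod_lt_of_pos i (by omega : (0 : ℤ) < n + 1); omega⟩ +
    i / (n + 1) * N

theorem periodicExtension_add (i : ℤ) :
    periodicExtension n N a (i + (n + 1)) = periodicExtension n N a i + N := by
  simp only [periodicExtension, Int.add_emod_right]
  rw [Int.add_ediv_of_dvd_right dvd_rfl, Int.ediv_self (by positivity), add_one_mul, add_assoc]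

theorem periodicExtension_natCast {t : ℕ} (ht : t < n + 1) :
    periodicExtension n N a t = a ⟨t, ht⟩ := by
  have ht' : (t : ℤ) < n + 1 := by omega
  simp [periodicExtension, Int.emod_eq_of_lt (Int.natCast_nonneg t) ht',
    Int.ediv_eq_zero_of_lt (Int.natCast_nonneg t) ht']

theorem monotone_periodicExtension (ha : Monotone a) (hlast : a (Fin.last n) ≤ a 0 + N) :
    Monotone (periodicExtension n N a) := by
  refine monotone_of_forall_map_add (by positivity) periodicExtension_add ?_
  rintro t ⟨ht0, htn⟩
  lift t to ℕ using ht0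
  rcases Nat.lt_or_ge t n with ht | ht
  · rw [periodicExtension_natCast (by omega), ← Nat.cast_succ, periodicExtension_natCast (by omega)]
    exact ha (Fin.mk_le_mk.2 t.le_succ)
  · obtain rfl : n = t := by omega
    rw [periodicExtension_natCast (by omega), ← zero_add ((n : ℤ) + 1), periodicExtension_add,
      ← Nat.cast_zero, periodicExtension_natCast (by omega)]
    exact hlast

end PeriodicExtension

namespace ParacyclicHom

variable {p q : ℕ}

def encode (f : {f : ℤ → ℤ // ParacyclicHom p q f}) :
    ZMod (q + 1) × {b : Fin p → Set.Icc (0 : ℤ) (q + 1) // Monotone b} :=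
  (f.1 0, ⟨fun j => ⟨f.1 (j + 1) - f.1 0, sub_nonneg.2 (f.2.1 (by positivity)), by
      have := f.2.1 (show (j : ℤ) + 1 ≤ 0 + (p + 1) by have := j.isLt; omega)
      rw [f.2.2] at this
      linarith⟩,
    fun j k hjk => Subtype.mk_le_mk.2 (sub_le_sub_right (f.2.1 (by simpa using hjk)) _)⟩)

theorem encode_eq_encode_iff {f g : {f : ℤ → ℤ // ParacyclicHom p q f}} :
    encode f = encode g ↔ ∃ m : ℤ, ∀ i, g.1 i = f.1 i + m * (q + 1) := by
  constructor
  · intro h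
    obtain ⟨h0, hdiff⟩ := Prod.ext_iff.1 h
    obtain ⟨m, hm⟩ : ((q : ℤ) + 1) ∣ g.1 0 - f.1 0 := by
      simpa using (ZMod.intCast_eq_intCast_iff_dvd_sub _ _ (q + 1)).1 h0
    refine ⟨m, eq_add_of_forall_map_add_of_eqOn_Ico (by positivity) f.2.2 g.2.2 ?_⟩
    rintro t ⟨ht0, htp⟩
    lift t to ℕ using ht0
    cases t with
    | zero => simp only [Nat.cast_zero]; linarith
    | succ j =>
      have := congrArg Subtype.val (congrFun (congrArg Subtype.val hdiff) ⟨j, by omega⟩)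
      simp only [encode] at this
      push_cast
      linarith
  · rintro ⟨m, hm⟩
    refine Prod.ext ?_ (Subtype.ext (funext fun j => Subtype.ext ?_))
    · simp [encode, hm 0]
    · simp only [encode, hm]
      ring

theorem encode_surjective : Function.Surjective (encode (p := p) (q := q)) := by
  rintro ⟨r, b, hb⟩
  let a : Fin (p + 1) → ℤ := Fin.cons (r.val : ℤ) fun j => r.val + b j
  have ha : Monotone a := by
    intro s t hst
    cases s using Fin.cases with
    | zero =>
      cases t using Fin.cases with
      | zero => rfl
      | succ k => simpa [a] using (b k).2.1
    | succ j =>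
      cases t using Fin.cases with
      | zero => exact absurd hst (Fin.succ_pos j).not_ge
      | succ k => simpa [a] using hb (Fin.succ_le_succ_iff.1 hst)
  have hle (t : Fin (p + 1)) : a t ≤ a 0 + (q + 1) := by
    cases t using Fin.cases with
    | zero => exact le_add_of_nonneg_right (by positivity)
    | succ j => simpa [a] using (b j).2.2
  have h0 : periodicExtension p (q + 1) a 0 = r.val := by
    simpa [a] using periodicExtension_natCast (a := a) (N := q + 1) (t := 0) (by omega)
  have hsucc (j : Fin p) : periodicExtension p (q + 1) a (j + 1) = r.val + b j := by
    have := periodicExtension_natCast (a := a) (N := q + 1) (t := j + 1) (by omega)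
    push_cast at this
    exact this.trans (Fin.cons_succ _ _ j)
  refine ⟨⟨periodicExtension p (q + 1) a, monotone_periodicExtension ha (hle _),
    periodicExtension_add⟩, Prod.ext ?_ (Subtype.ext (funext fun j => Subtype.ext ?_))⟩
  · simp [encode, h0]
  · simp [encode, h0, hsucc]

end ParacyclicHom

theorem cyclic_homset_card (p q : ℕ) :
    Nat.card (Quot (fun f g : {f : ℤ → ℤ // ParacyclicHom p q f} =>
        ∃ m : ℤ, ∀ i : ℤ, g.val i = f.val i + m * ((q : ℤ) + 1))) =
      (p + 1) * Nat.choose (p + q + 1) (p + 1) := by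
  have hker (f g : {f : ℤ → ℤ // ParacyclicHom p q f}) :
      (∃ m : ℤ, ∀ i : ℤ, g.val i = f.val i + m * ((q : ℤ) + 1)) ↔
        Setoid.ker ParacyclicHom.encode f g := by
    rw [Setoid.ker_def, ParacyclicHom.encode_eq_encode_iff]
  have hIcc : Fintype.card (Set.Icc (0 : ℤ) (q + 1)) = q + 2 := by simp; omega
  rw [Nat.card_congr ((Quot.congrRight hker).trans
      (Setoid.quotientKerEquivOfSurjective _ ParacyclicHom.encode_surjective)),
    Nat.card_prod, Nat.card_zmod, card_monotone_fin, hIcc, show q + 2 + p - 1 = p + q + 1 by omega]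
  have h := Nat.choose_succ_right_eq (p + q + 1) p
  rw [show p + q + 1 - p = q + 1 by omega] at h
  linarith
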